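/- Let E be a real Hilbert space and G : E × E → ℝ ∪ {+∞} an anti-selfdual Lagrangian with G(0,0) < +∞, and for λ > 0 let G_λ(x, p) = inf { G(z, p) + ‖x − z‖²/(2λ) + (λ/2)‖p‖² : z ∈ E } be its λ-regularization. Suppose (λ_n) is a sequence of positive numbers with λ_n → 0, and (x_n), (p_n) are sequences in E with x_n ⇀ x and p_n ⇀ p weakly, such that the sequence G_{λ_n}(x_n, p_n) is bounded from above. Then G(x, p) ≤ liminf_{n → ∞} G_{λ_n}(x_n, p_n). -/

import Mathlib

open MeasureTheory Set Filter Topology RealInnerProductSpace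

noncomputable section

variable {E : Type*} [NormedAddCommGroup E] [InnerProductSpace ℝ E]

/-- Fenchel conjugate in both variables. -/
def conj2Fn (L : E → E → EReal) (p q : E) : EReal :=
  ⨆ x : E, ⨆ y : E, ((⟪p, x⟫ + ⟪q, y⟫ : ℝ) : EReal) - L x y

/-- Convexity for extended-real-valued functions. -/
def ConvexEF {F : Type*} [AddCommMonoid F] [Module ℝ F] (f : F → EReal) : Prop :=
  ∀ x y : F, ∀ a b : ℝ, 0 ≤ a → 0 ≤ b → a + b = 1 →
    f (a • x + b • y) ≤ (a : EReal) * f x + (b : EReal) * f y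

/-- Anti-selfdual Lagrangian: convex, lower semicontinuous and `L*(p,x) = L(-x,-p)`. -/
def IsASD (L : E → E → EReal) : Prop :=
  ConvexEF (fun z : E × E => L z.1 z.2) ∧
  LowerSemicontinuous (fun z : E × E => L z.1 z.2) ∧
  ∀ x p : E, conj2Fn L p x = L (-x) (-p)

/-- The `λ`-regularization `G_λ(x,p) = inf_z { G(z,p) + ‖x-z‖²/(2λ) + (λ/2)‖p‖² }`. -/
def lamReg (G : E → E → EReal) (lam : ℝ) (x p : E) : EReal :=
  ⨅ z : E, G z p + ((‖x - z‖^2 / (2*lam) : ℝ) : EReal) + ((lam/2 * ‖p‖^2 : ℝ) : EReal)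

/-! By anti-selfduality `G(x, p) = G*(-p, -x)` is the supremum over `(z, w)` of the affine maps
`(x, p) ↦ -⟪w, x⟫ - ⟪z, p⟫ - G(z, w)`, each continuous for the weak topology. The Fenchel–Young
inequality `G(u, p) ≥ -⟪w, u⟫ - ⟪z, p⟫ - G(z, w)` and `⟪w, u - x⟫ ≤ ‖x - u‖²/(2λ) + (λ/2)‖w‖²`
show that each such map lies below `G_λ + (λ/2)‖w‖²`, so its value at `(x, p)` is at most
`liminf G_{λₙ}(xₙ, pₙ)`. -/

theorem le_conj2Fn (G : E → E → EReal) (p q x y : E) :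
    ((⟪p, x⟫ + ⟪q, y⟫ : ℝ) : EReal) - G x y ≤ conj2Fn G p q :=
  le_iSup₂_of_le (f := fun x y => ((⟪p, x⟫ + ⟪q, y⟫ : ℝ) : EReal) - G x y) x y le_rfl

theorem ne_bot_of_conj2Fn_eq {G : E → E → EReal}
    (hG : ∀ x p, conj2Fn G p x = G (-x) (-p)) (z w : E) : G z w ≠ ⊥ := by
  intro hbot
  -- `G z w = ⊥` forces `G z w = G*(-w, -z) = ⊤`
  have htop : conj2Fn G (-w) (-z) = ⊤ :=
    top_le_iff.mp <| by simpa [hbot] using le_conj2Fn G (-w) (-z) z w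
  simp [hG, hbot] at htop

theorem fenchel_young_of_conj2Fn_eq {G : E → E → EReal}
    (hG : ∀ x p, conj2Fn G p x = G (-x) (-p)) {z w : E} {c : ℝ} (hc : G z w = c) (u v : E) :
    ((-⟪w, u⟫ - ⟪z, v⟫ - c : ℝ) : EReal) ≤ G u v := by
  have h := le_conj2Fn G (-w) (-z) u v
  rw [hG, neg_neg, neg_neg, hc,
    EReal.sub_le_iff_le_add (Or.inr (EReal.coe_ne_top c)) (Or.inr (EReal.coe_ne_bot c))] at h
  rw [EReal.coe_sub]
  refine EReal.sub_le_of_le_add' ?_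
  simpa [inner_neg_left, sub_eq_add_neg] using h

theorem real_inner_le_norm_sq_div_add_mul_norm_sq {lam : ℝ} (hlam : 0 < lam) (w y : E) :
    ⟪w, y⟫ ≤ ‖y‖ ^ 2 / (2 * lam) + lam / 2 * ‖w‖ ^ 2 := by
  have hcs := real_inner_le_norm w y
  rw [div_add' _ _ _ (by positivity), le_div_iff₀ (by positivity)]
  nlinarith [sq_nonneg (lam * ‖w‖ - ‖y‖)]

theorem coe_le_lamReg_of_conj2Fn_eq {G : E → E → EReal}
    (hG : ∀ x p, conj2Fn G p x = G (-x) (-p)) {lam : ℝ} (hlam : 0 < lam)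
    {z w : E} {c : ℝ} (hc : G z w = c) (x v : E) :
    ((-⟪w, x⟫ - ⟪z, v⟫ - c - lam / 2 * ‖w‖ ^ 2 : ℝ) : EReal) ≤ lamReg G lam x v := by
  refine le_iInf fun u => ?_
  have hfy := fenchel_young_of_conj2Fn_eq hG hc u v
  have hquad := real_inner_le_norm_sq_div_add_mul_norm_sq hlam w (u - x)
  rw [inner_sub_right, norm_sub_rev] at hquad
  calc ((-⟪w, x⟫ - ⟪z, v⟫ - c - lam / 2 * ‖w‖ ^ 2 : ℝ) : EReal)
      ≤ ((-⟪w, u⟫ - ⟪z, v⟫ - c : ℝ) : EReal) + ((‖x - u‖ ^ 2 / (2 * lam) : ℝ) : EReal)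
          + ((lam / 2 * ‖v‖ ^ 2 : ℝ) : EReal) := by
        rw [← EReal.coe_add, ← EReal.coe_add, EReal.coe_le_coe_iff]
        nlinarith [sq_nonneg ‖v‖]
    _ ≤ G u v + ((‖x - u‖ ^ 2 / (2 * lam) : ℝ) : EReal) + ((lam / 2 * ‖v‖ ^ 2 : ℝ) : EReal) := by
        gcongr

theorem lamReg_liminf_general (G : E → E → EReal) (hG : IsASD G)
    (lam : ℕ → ℝ) (hpos : ∀ n, 0 < lam n) (hlam : Tendsto lam atTop (nhds 0))
    (x p : ℕ → E) (x₀ p₀ : E)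
    (hx : ∀ y : E, Tendsto (fun n => (⟪y, x n⟫ : ℝ)) atTop (nhds ⟪y, x₀⟫))
    (hp : ∀ y : E, Tendsto (fun n => (⟪y, p n⟫ : ℝ)) atTop (nhds ⟪y, p₀⟫)) :
    G x₀ p₀ ≤ Filter.liminf (fun n => lamReg G (lam n) (x n) (p n)) atTop := by
  have hconj := hG.2.2
  rw [← neg_neg x₀, ← neg_neg p₀, ← hconj]
  refine iSup₂_le fun z w => ?_
  induction hc : G z w using EReal.rec with
  | bot => exact absurd hc (ne_bot_of_conj2Fn_eq hconj z w)
  | top => simp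
  | coe c =>
    have hlim : Tendsto (fun n => -⟪w, x n⟫ - ⟪z, p n⟫ - c - lam n / 2 * ‖w‖ ^ 2) atTop
        (𝓝 (-⟪w, x₀⟫ - ⟪z, p₀⟫ - c)) := by
      simpa using
        (((hx w).neg.sub (hp z)).sub_const c).sub ((hlam.div_const 2).mul_const (‖w‖ ^ 2))
    calc ((⟪-p₀, z⟫ + ⟪-x₀, w⟫ : ℝ) : EReal) - c
        = ((-⟪w, x₀⟫ - ⟪z, p₀⟫ - c : ℝ) : EReal) := by
          rw [← EReal.coe_sub, EReal.coe_eq_coe_iff]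
          simp only [inner_neg_left, real_inner_comm]
          ring
      _ = liminf (fun n => ((-⟪w, x n⟫ - ⟪z, p n⟫ - c - lam n / 2 * ‖w‖ ^ 2 : ℝ) : EReal))
            atTop := (EReal.tendsto_coe.mpr hlim).liminf_eq.symm
      _ ≤ liminf (fun n => lamReg G (lam n) (x n) (p n)) atTop :=
        liminf_le_liminf (.of_forall fun n =>
          coe_le_lamReg_of_conj2Fn_eq hconj (hpos n) hc (x n) (p n))

/-- Weak lower semicontinuity of an anti-selfdual Lagrangian along its
`λ`-regularizations: if `λₙ → 0`, `xₙ ⇀ x`, `pₙ ⇀ p` weakly, and `G_{λₙ}(xₙ,pₙ)` is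
bounded above, then `G(x,p) ≤ liminf G_{λₙ}(xₙ,pₙ)`. -/
theorem lamReg_liminf (G : E → E → EReal) (hG : IsASD G) (hG00 : G 0 0 < ⊤)
    (lam : ℕ → ℝ) (hpos : ∀ n, 0 < lam n) (hlam : Tendsto lam atTop (nhds 0))
    (x p : ℕ → E) (x₀ p₀ : E)
    (hx : ∀ y : E, Tendsto (fun n => (⟪y, x n⟫ : ℝ)) atTop (nhds ⟪y, x₀⟫))
    (hp : ∀ y : E, Tendsto (fun n => (⟪y, p n⟫ : ℝ)) atTop (nhds ⟪y, p₀⟫))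
    (hbdd : ∃ c : ℝ, ∀ n, lamReg G (lam n) (x n) (p n) ≤ (c : EReal)) :
    G x₀ p₀ ≤ Filter.liminf (fun n => lamReg G (lam n) (x n) (p n)) atTop :=
  lamReg_liminf_general G hG lam hpos hlam x p x₀ p₀ hx hp
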